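/- Define f: (finite graphs α with a distinguished structure) → ℕ recursively by f(∅) = 1 and f(α) = Σ_{β informative, β ⊊ α} f(β) for nonempty informative α. Then for every nonempty informative α, f(α) ≤ (2|α|)^(|α| − |V(α)| + 1), where |α| is the number of edges and |V(α)| is the number of non-isolated vertices of α. -/

import Mathlib

open scoped Classical

/-- A graph given as a finite set of edges (u,v) with u < v. -/
def edgeVerts (α : Finset (ℕ × ℕ)) : Finset ℕ :=
  α.image Prod.fst ∪ α.image Prod.snd

def edgeDeg (α : Finset (ℕ × ℕ)) (v : ℕ) : ℕ :=
  (α.filter (fun e => e.1 = v ∨ e.2 = v)).card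

def graphOf (α : Finset (ℕ × ℕ)) : SimpleGraph ℕ :=
  SimpleGraph.fromRel (fun u v => (u, v) ∈ α)

/-- α is informative: vertices 1 and 2 belong to V(α), every other vertex of
V(α) has degree ≥ 2, and α is connected (the empty graph is informative by
convention). -/
def Informative (α : Finset (ℕ × ℕ)) : Prop :=
  α = ∅ ∨
    (1 ∈ edgeVerts α ∧ 2 ∈ edgeVerts α ∧
      (∀ v ∈ edgeVerts α, v ≠ 1 → v ≠ 2 → 2 ≤ edgeDeg α v) ∧
      (∀ u ∈ edgeVerts α, ∀ v ∈ edgeVerts α, (graphOf α).Reachable u v))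

/-!
Write `exc γ = |γ| + 1 - |V(γ)|`. Summing degrees gives `|V(γ)| ≤ |γ| + 1` for nonempty
informative `γ`, and `exc` drops strictly from `α` to any nonempty informative `β ⊊ α`: every
vertex of `V(α) \ V(β)` has degree `≥ 2` in `α \ β`, while connectivity to the vertex `1 ∈ V(β)`
yields an edge of `α \ β` with only one endpoint in `V(α) \ V(β)`; double counting then gives
`|α \ β| > |V(α) \ V(β)|`.

Informative graphs are closed under union, so every edge set `t` contains a largest informative
subgraph `maxInformative t`. Deleting an edge of `α \ β` and passing to the largest informative
subgraph lowers the excess, so by induction `β = maxInformative (α \ S)` for a nonempty `S ⊆ α`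
with `|S| ≤ exc α - exc β`. As this code `S` determines `β`, the recursion gives
`f α ≤ 1 + Σ_S (2|α|)^(exc α - |S|)`, and counting the sets `S` by size bounds this by
`(2|α|)^(exc α)`.
-/

open Finset

section EdgeSets

variable {a b γ : Finset (ℕ × ℕ)}

lemma mem_edgeVerts {v : ℕ} : v ∈ edgeVerts γ ↔ ∃ e ∈ γ, e.1 = v ∨ e.2 = v := by
  simp only [edgeVerts, mem_union, mem_image]
  aesop

lemma edgeVerts_mono (h : a ⊆ b) : edgeVerts a ⊆ edgeVerts b :=
  union_subset_union (image_subset_image h) (image_subset_image h)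

lemma edgeVerts_union : edgeVerts (a ∪ b) = edgeVerts a ∪ edgeVerts b := by
  simp only [edgeVerts, image_union]
  exact union_union_union_comm _ _ _ _

lemma edgeDeg_pos {v : ℕ} (h : v ∈ edgeVerts γ) : 0 < edgeDeg γ v := by
  obtain ⟨e, he, hv⟩ := mem_edgeVerts.1 h
  exact card_pos.2 ⟨e, mem_filter.2 ⟨he, hv⟩⟩

lemma edgeDeg_mono (h : a ⊆ b) (v : ℕ) : edgeDeg a v ≤ edgeDeg b v :=
  card_le_card (filter_subset_filter _ h)

lemma graphOf_mono (h : a ⊆ b) : graphOf a ≤ graphOf b := by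
  intro u v huv
  rw [graphOf, SimpleGraph.fromRel_adj] at huv ⊢
  exact ⟨huv.1, huv.2.imp (@h _) (@h _)⟩

lemma sum_edgeDeg_eq (γ : Finset (ℕ × ℕ)) (W : Finset ℕ) :
    ∑ v ∈ W, edgeDeg γ v = ∑ e ∈ γ, #({e.1, e.2} ∩ W) := by
  simp only [edgeDeg, card_filter]
  rw [sum_comm]
  refine sum_congr rfl fun e _ => ?_
  rw [← card_filter, inter_comm, ← filter_mem_eq_inter]
  simp only [mem_insert, mem_singleton, eq_comm]

lemma card_endpoints_inter_le_two (e : ℕ × ℕ) (W : Finset ℕ) : #({e.1, e.2} ∩ W) ≤ 2 :=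
  (card_le_card inter_subset_left).trans card_le_two

lemma card_endpoints_inter_le_one {e : ℕ × ℕ} {W : Finset ℕ} (h : e.1 ∉ W ∨ e.2 ∉ W) :
    #({e.1, e.2} ∩ W) ≤ 1 := by
  rw [card_le_one]
  simp only [mem_inter, mem_insert, mem_singleton]
  grind

lemma sum_edgeDeg_le (γ : Finset (ℕ × ℕ)) (W : Finset ℕ) :
    ∑ v ∈ W, edgeDeg γ v ≤ 2 * #γ := by
  rw [sum_edgeDeg_eq, mul_comm, ← smul_eq_mul, ← sum_const]
  exact sum_le_sum fun e _ => card_endpoints_inter_le_two e W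

end EdgeSets

section Informative

variable {a b γ : Finset (ℕ × ℕ)}

lemma card_edgeVerts_le (hγ : Informative γ) (hne : γ ≠ ∅) : #(edgeVerts γ) ≤ #γ + 1 := by
  obtain ⟨h1, h2, hdeg, -⟩ := hγ.resolve_left hne
  have hends : ({1, 2} : Finset ℕ) ⊆ edgeVerts γ := insert_subset h1 (singleton_subset_iff.2 h2)
  have hinner : 2 * #(edgeVerts γ \ {1, 2}) ≤ ∑ v ∈ edgeVerts γ \ {1, 2}, edgeDeg γ v := by
    rw [mul_comm, ← smul_eq_mul, ← sum_const]
    refine sum_le_sum fun v hv => ?_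
    simp only [mem_sdiff, mem_insert, mem_singleton, not_or] at hv
    exact hdeg v hv.1 hv.2.1 hv.2.2
  have hcorners : 2 ≤ ∑ v ∈ ({1, 2} : Finset ℕ), edgeDeg γ v := by
    rw [sum_pair (by norm_num)]
    linarith [edgeDeg_pos h1, edgeDeg_pos h2]
  have hsplit := sum_sdiff hends (f := edgeDeg γ)
  have hhandshake := sum_edgeDeg_le γ (edgeVerts γ)
  rw [card_sdiff_of_subset hends] at hinner
  have hcard : #({1, 2} : Finset ℕ) = 2 := rfl
  omega

lemma exists_edge_leaving (ha : Informative a) {N : Finset ℕ} (hNa : N ⊆ edgeVerts a)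
    (hN : N.Nonempty) (h1 : 1 ∉ N) : ∃ e ∈ a, (e.1 ∈ N ∨ e.2 ∈ N) ∧ (e.1 ∉ N ∨ e.2 ∉ N) := by
  obtain ⟨v, hv⟩ := hN
  rcases ha with rfl | ⟨h1a, -, -, hconn⟩
  · simpa [edgeVerts] using hNa hv
  obtain ⟨w⟩ := hconn v (hNa hv) 1 h1a
  obtain ⟨d, -, hd, hd'⟩ := w.exists_boundary_dart (N : Set ℕ) hv h1
  have hadj : (graphOf a).Adj d.fst d.snd := d.adj
  simp only [graphOf, SimpleGraph.fromRel_adj] at hadj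
  rcases hadj.2 with h | h
  · exact ⟨_, h, Or.inl hd, Or.inr hd'⟩
  · exact ⟨_, h, Or.inr hd, Or.inl hd'⟩

lemma card_sdiff_edgeVerts_lt (ha : Informative a) (h1 : 1 ∈ edgeVerts b)
    (h2 : 2 ∈ edgeVerts b) (hba : b ⊂ a) : #(edgeVerts a \ edgeVerts b) < #(a \ b) := by
  set N := edgeVerts a \ edgeVerts b
  rcases N.eq_empty_or_nonempty with hN | hN
  · rw [hN, card_empty, card_pos]
    exact sdiff_nonempty.2 hba.not_subset
  have hnew : ∀ e ∈ a, (e.1 ∈ N ∨ e.2 ∈ N) → e ∈ a \ b := by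
    intro e he hN
    refine mem_sdiff.2 ⟨he, fun heb => ?_⟩
    rcases hN with h | h
    · exact (mem_sdiff.1 h).2 (mem_edgeVerts.2 ⟨e, heb, Or.inl rfl⟩)
    · exact (mem_sdiff.1 h).2 (mem_edgeVerts.2 ⟨e, heb, Or.inr rfl⟩)
  have hdeg : ∀ v ∈ N, 2 ≤ edgeDeg (a \ b) v := by
    intro v hv
    obtain ⟨hva, hvb⟩ := mem_sdiff.1 hv
    obtain ⟨-, -, hdega, -⟩ := ha.resolve_left (by rintro rfl; simp [edgeVerts] at hva)
    refine (hdega v hva (by rintro rfl; exact hvb h1) (by rintro rfl; exact hvb h2)).trans ?_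
    refine card_le_card fun e he => ?_
    obtain ⟨hea, hev⟩ := mem_filter.1 he
    refine mem_filter.2 ⟨hnew e hea ?_, hev⟩
    rcases hev with rfl | rfl
    exacts [Or.inl hv, Or.inr hv]
  obtain ⟨e₀, he₀, hmeets, hleaves⟩ :=
    exists_edge_leaving ha sdiff_subset hN fun h => (mem_sdiff.1 h).2 h1
  have hlt : ∑ e ∈ a \ b, #({e.1, e.2} ∩ N) < ∑ _e ∈ a \ b, 2 :=
    sum_lt_sum (fun e _ => card_endpoints_inter_le_two e N)
      ⟨e₀, hnew e₀ he₀ hmeets, (card_endpoints_inter_le_one hleaves).trans_lt one_lt_two⟩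
  have : 2 * #N < 2 * #(a \ b) :=
    calc 2 * #N = ∑ _v ∈ N, 2 := by rw [sum_const, smul_eq_mul, mul_comm]
      _ ≤ ∑ v ∈ N, edgeDeg (a \ b) v := sum_le_sum hdeg
      _ = ∑ e ∈ a \ b, #({e.1, e.2} ∩ N) := sum_edgeDeg_eq _ _
      _ < 2 * #(a \ b) := by rwa [sum_const, smul_eq_mul, mul_comm] at hlt
  omega

end Informative

def excess (γ : Finset (ℕ × ℕ)) : ℕ := #γ + 1 - #(edgeVerts γ)

lemma excess_lt_excess {a b : Finset (ℕ × ℕ)} (ha : Informative a) (hb : Informative b)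
    (hbne : b ≠ ∅) (hba : b ⊂ a) : excess b < excess a := by
  obtain ⟨h1, h2, -, -⟩ := hb.resolve_left hbne
  have hdrop := card_sdiff_edgeVerts_lt ha h1 h2 hba
  rw [card_sdiff_of_subset (edgeVerts_mono hba.subset), card_sdiff_of_subset hba.subset] at hdrop
  have hb₀ := card_edgeVerts_le hb hbne
  have hV := card_le_card (edgeVerts_mono hba.subset)
  unfold excess
  omega

lemma Informative.union {a b : Finset (ℕ × ℕ)} (ha : Informative a) (hb : Informative b) :
    Informative (a ∪ b) := by
  rcases eq_or_ne a ∅ with rfl | hane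
  · simpa using hb
  rcases eq_or_ne b ∅ with rfl | hbne
  · simpa using ha
  obtain ⟨h1a, h2a, hdega, hconna⟩ := ha.resolve_left hane
  obtain ⟨h1b, -, hdegb, hconnb⟩ := hb.resolve_left hbne
  have hreach : ∀ w ∈ edgeVerts (a ∪ b), (graphOf (a ∪ b)).Reachable w 1 := by
    intro w hw
    rcases mem_union.1 (edgeVerts_union ▸ hw) with h | h
    · exact (hconna w h 1 h1a).mono (graphOf_mono subset_union_left)
    · exact (hconnb w h 1 h1b).mono (graphOf_mono subset_union_right)
  refine Or.inr ⟨edgeVerts_union ▸ mem_union_left _ h1a, edgeVerts_union ▸ mem_union_left _ h2a,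
    fun v hv hv1 hv2 => ?_, fun u hu v hv => (hreach u hu).trans (hreach v hv).symm⟩
  rcases mem_union.1 (edgeVerts_union ▸ hv) with h | h
  · exact (hdega v h hv1 hv2).trans (edgeDeg_mono subset_union_left v)
  · exact (hdegb v h hv1 hv2).trans (edgeDeg_mono subset_union_right v)

noncomputable def maxInformative (t : Finset (ℕ × ℕ)) : Finset (ℕ × ℕ) :=
  (t.powerset.filter Informative).sup id

section MaxInformative

variable {S t : Finset (ℕ × ℕ)}

lemma informative_maxInformative (t : Finset (ℕ × ℕ)) : Informative (maxInformative t) :=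
  sup_induction (Or.inl rfl) (fun _ hx _ hy => hx.union hy) fun _ hS => (mem_filter.1 hS).2

lemma maxInformative_subset (t : Finset (ℕ × ℕ)) : maxInformative t ⊆ t :=
  Finset.sup_le fun _ hS => mem_powerset.1 (mem_filter.1 hS).1

lemma subset_maxInformative (hS : Informative S) (h : S ⊆ t) : S ⊆ maxInformative t :=
  le_sup (f := id) (mem_filter.2 ⟨mem_powerset.2 h, hS⟩)

lemma maxInformative_eq_self (ht : Informative t) : maxInformative t = t :=
  (maxInformative_subset t).antisymm (subset_maxInformative ht le_rfl)

lemma maxInformative_sdiff_maxInformative (t S : Finset (ℕ × ℕ)) :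
    maxInformative (maxInformative t \ S) = maxInformative (t \ S) := by
  refine (subset_maxInformative (informative_maxInformative _) ?_).antisymm
    (subset_maxInformative (informative_maxInformative _) ?_)
  · exact (maxInformative_subset _).trans (sdiff_subset_sdiff (maxInformative_subset t) le_rfl)
  · have hM := maxInformative_subset (t \ S)
    refine subset_sdiff.2 ⟨subset_maxInformative (informative_maxInformative _) ?_, ?_⟩
    · exact hM.trans sdiff_subset
    · exact (subset_sdiff.1 hM).2
end MaxInformative

lemma exists_eq_maxInformative_sdiff {a b : Finset (ℕ × ℕ)} (ha : Informative a)
    (hb : Informative b) (hbne : b ≠ ∅) (hba : b ⊆ a) :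
    ∃ S ⊆ a \ b, #S + excess b ≤ excess a ∧ maxInformative (a \ S) = b := by
  induction a using Finset.strongInduction with
  | H a ih =>
  obtain rfl | hba' := hba.eq_or_ssubset
  · exact ⟨∅, empty_subset _, by simp, by simpa using maxInformative_eq_self hb⟩
  obtain ⟨s, hsa, hsb⟩ := exists_of_ssubset hba'
  set A := maxInformative (a.erase s)
  have hA : Informative A := informative_maxInformative _
  have hbA : b ⊆ A := subset_maxInformative hb (subset_erase.2 ⟨hba, hsb⟩)
  have hAa : A ⊂ a := ssubset_of_subset_of_ne ((maxInformative_subset _).trans (erase_subset _ _))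
    fun h => notMem_erase s a (maxInformative_subset _ (h.symm ▸ hsa : s ∈ A))
  have hexc := excess_lt_excess ha hA (fun h => hbne (subset_empty.1 (h ▸ hbA))) hAa
  obtain ⟨S, hS, hcard, hmax⟩ := ih A hAa hA hbA
  refine ⟨insert s S, insert_subset (mem_sdiff.2 ⟨hsa, hsb⟩)
    (hS.trans (sdiff_subset_sdiff hAa.subset le_rfl)), ?_, ?_⟩
  · linarith [card_insert_le s S]
  · rw [sdiff_insert, ← erase_sdiff_comm, ← maxInformative_sdiff_maxInformative, hmax]

lemma exists_nonempty_eq_maxInformative_sdiff {a b : Finset (ℕ × ℕ)} (ha : Informative a)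
    (hb : Informative b) (hbne : b ≠ ∅) (hba : b ⊂ a) :
    ∃ S ⊆ a, S.Nonempty ∧ #S + excess b ≤ excess a ∧ maxInformative (a \ S) = b := by
  obtain ⟨S, hS, hcard, hmax⟩ := exists_eq_maxInformative_sdiff ha hb hbne hba.subset
  refine ⟨S, hS.trans sdiff_subset, nonempty_iff_ne_empty.2 ?_, hcard, hmax⟩
  rintro rfl
  rw [sdiff_empty, maxInformative_eq_self ha] at hmax
  exact hba.ne hmax.symm

lemma one_add_sum_pow_sub_card_le {α : Type*} {a : Finset α} (ha : a.Nonempty) {E : ℕ}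
    {C : Finset (Finset α)} (hC : ∀ S ∈ C, S ⊆ a ∧ S.Nonempty ∧ #S ≤ E) :
    1 + ∑ S ∈ C, (2 * #a) ^ (E - #S) ≤ (2 * #a) ^ E := by
  set A := #a
  have hfiber : ∀ i ∈ range E, #{S ∈ C | E - #S = i} ≤ A ^ (E - i) := by
    intro i hi
    calc #{S ∈ C | E - #S = i} ≤ #(a.powersetCard (E - i)) := by
          refine card_le_card fun S hS => ?_
          obtain ⟨hSC, hSi⟩ := mem_filter.1 hS
          exact mem_powersetCard.2 ⟨(hC S hSC).1, by have := (hC S hSC).2.2; omega⟩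
      _ ≤ A ^ (E - i) := by rw [card_powersetCard]; exact Nat.choose_le_pow _ _
  have himage : C.image (fun S => E - #S) ⊆ range E := by
    intro i hi
    obtain ⟨S, hS, rfl⟩ := mem_image.1 hi
    obtain ⟨-, hSne, hSE⟩ := hC S hS
    have := card_pos.2 hSne
    exact mem_range.2 (by omega)
  have hgeom : ∑ i ∈ range E, A ^ (E - i) * (2 * A) ^ i + A ^ E = (2 * A) ^ E := by
    rw [two_mul, ← geom_sum₂_mul_add A A E, sum_mul]
    congr 1
    refine sum_congr rfl fun i hi => ?_
    rw [show E - i = E - 1 - i + 1 by have := mem_range.1 hi; omega, pow_succ]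
    ring
  calc 1 + ∑ S ∈ C, (2 * A) ^ (E - #S)
      = 1 + ∑ i ∈ C.image (fun S => E - #S), #{S ∈ C | E - #S = i} • (2 * A) ^ i := by
        rw [sum_comp (fun i => (2 * A) ^ i)]
    _ ≤ 1 + ∑ i ∈ range E, A ^ (E - i) * (2 * A) ^ i := by
        gcongr 1 + ?_
        refine (sum_le_sum_of_subset himage).trans (sum_le_sum fun i hi => ?_)
        rw [smul_eq_mul]
        exact Nat.mul_le_mul_right _ (hfiber i hi)
    _ ≤ (2 * A) ^ E := by
        have := Nat.one_le_pow E A (card_pos.2 ha)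
        omega

theorem le_two_mul_card_pow_excess (f : Finset (ℕ × ℕ) → ℕ) (hbase : f ∅ = 1)
    (hrec : ∀ α : Finset (ℕ × ℕ), Informative α → α ≠ ∅ →
      f α = ∑ β ∈ (α.powerset.erase α).filter Informative, f β)
    (a : Finset (ℕ × ℕ)) (ha : Informative a) (hne : a ≠ ∅) :
    f a ≤ (2 * #a) ^ excess a := by
  induction a using Finset.strongInduction with
  | H a ih =>
  set E := excess a
  set Q := ((a.powerset.erase a).filter Informative).erase ∅
  have hQ : ∀ b ∈ Q, Informative b ∧ b ≠ ∅ ∧ b ⊂ a := by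
    intro b hb
    simp only [Q, mem_erase, mem_filter, mem_powerset] at hb
    exact ⟨hb.2.2, hb.1, ssubset_of_subset_of_ne hb.2.1.2 hb.2.1.1⟩
  have hsplit : f a = 1 + ∑ b ∈ Q, f b := by
    rw [hrec a ha hne, ← hbase, add_sum_erase]
    exact mem_filter.2 ⟨mem_erase.2 ⟨Ne.symm hne, empty_mem_powerset a⟩, Or.inl rfl⟩
  have hcode : ∀ b ∈ Q, ∃ S ⊆ a, S.Nonempty ∧ #S + excess b ≤ E ∧ maxInformative (a \ S) = b :=
    fun b hbQ =>
      let ⟨hb, hbne, hba⟩ := hQ b hbQ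
      exists_nonempty_eq_maxInformative_sdiff ha hb hbne hba
  choose! code hcode using hcode
  have hterm : ∀ b ∈ Q, f b ≤ (2 * #a) ^ (E - #(code b)) := by
    intro b hbQ
    obtain ⟨hb, hbne, hba⟩ := hQ b hbQ
    calc f b ≤ (2 * #b) ^ excess b := ih b hba hb hbne
      _ ≤ (2 * #a) ^ excess b := Nat.pow_le_pow_left (by linarith [card_le_card hba.subset]) _
      _ ≤ (2 * #a) ^ (E - #(code b)) := by
          refine Nat.pow_le_pow_right ?_ (by have := (hcode b hbQ).2.2.1; omega)
          linarith [card_pos.2 (nonempty_iff_ne_empty.2 hne)]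
  have hinj : Set.InjOn code Q := fun b hb b' hb' h => by
    rw [← (hcode b hb).2.2.2, ← (hcode b' hb').2.2.2, h]
  calc f a = 1 + ∑ b ∈ Q, f b := hsplit
    _ ≤ 1 + ∑ b ∈ Q, (2 * #a) ^ (E - #(code b)) := by gcongr with b hb; exact hterm b hb
    _ = 1 + ∑ S ∈ Q.image code, (2 * #a) ^ (E - #S) := by rw [sum_image hinj]
    _ ≤ (2 * #a) ^ E := one_add_sum_pow_sub_card_le (nonempty_iff_ne_empty.2 hne) fun S hS => by
        obtain ⟨b, hb, rfl⟩ := mem_image.1 hS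
        obtain ⟨hSa, hSne, hcard, -⟩ := hcode b hb
        exact ⟨hSa, hSne, by omega⟩

/-- Lemma 5.4: if f satisfies f(∅) = 1 and, for every nonempty informative α,
f(α) = Σ over proper informative subgraphs β ⊊ α of f(β), then
f(α) ≤ (2|α|)^(|α| − |V(α)| + 1) for every nonempty informative α. -/
theorem informative_recursion_bound (f : Finset (ℕ × ℕ) → ℕ)
    (hbase : f ∅ = 1)
    (hrec : ∀ α : Finset (ℕ × ℕ), Informative α → α ≠ ∅ →
      f α = ∑ β ∈ (α.powerset.erase α).filter Informative, f β) :
    ∀ α : Finset (ℕ × ℕ), Informative α → α ≠ ∅ →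
      f α ≤ (2 * α.card) ^ (α.card - (edgeVerts α).card + 1) := by
  intro a ha hne
  refine (le_two_mul_card_pow_excess f hbase hrec a ha hne).trans (Nat.pow_le_pow_right ?_ ?_)
  · linarith [card_pos.2 (nonempty_iff_ne_empty.2 hne)]
  · unfold excess
    omega
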